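/- Let X be an (n-1)×n real matrix with one-dimensional kernel spanned by Δ = (δ_1,...,δ_n). Suppose that for each j = 1,...,n, the vector v_j = (m_1 s_{1j}, m_2 s_{2j}, ..., m_n s_{nj}) lies in ker(X), where m_i ≠ 0 and s_{ij} = s_{ji} for all i,j. Then there exists a constant κ (possibly zero) such that m_i m_j s_{ij} = κ δ_i δ_j for all i,j. -/
import Mathlib

/-- If the kernel of `X` is one-dimensional, spanned by the nonzero vector `Δ`, the `m i`
are nonzero, `s` is symmetric, and for each `j` the vector `i ↦ m i * s i j` lies in the
kernel of `X`, then there is a constant `κ` with `m i * m j * s i j = κ * δ i * δ j`. -/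
theorem stmt_1 (n : ℕ) (X : Matrix (Fin n) (Fin (n + 1)) ℝ)
    (Δ : Fin (n + 1) → ℝ) (hΔ0 : Δ ≠ 0) (hΔker : X.mulVec Δ = 0)
    (hspan : ∀ v : Fin (n + 1) → ℝ, X.mulVec v = 0 → ∃ c : ℝ, v = c • Δ)
    (m : Fin (n + 1) → ℝ) (hm : ∀ i, m i ≠ 0)
    (s : Fin (n + 1) → Fin (n + 1) → ℝ) (hsym : ∀ i j, s i j = s j i)
    (hker : ∀ j, X.mulVec (fun i => m i * s i j) = 0) :
    ∃ κ : ℝ, ∀ i j, m i * m j * s i j = κ * Δ i * Δ j := by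
  choose c hc using fun j => hspan _ (hker j)
  have key : ∀ i j, m i * s i j = c j * Δ i := by
    intro i j
    have := congrFun (hc j) i
    simpa using this
  -- f j = m j * c j satisfies m i * m j * s i j = f j * Δ i
  have h1 : ∀ i j, m i * m j * s i j = (m j * c j) * Δ i := by
    intro i j
    calc m i * m j * s i j = m j * (m i * s i j) := by ring
    _ = m j * (c j * Δ i) := by rw [key i j]
    _ = (m j * c j) * Δ i := by ring
  have h2 : ∀ i j, (m j * c j) * Δ i = (m i * c i) * Δ j := by
    intro i j
    calc (m j * c j) * Δ i = m i * m j * s i j := (h1 i j).symm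
    _ = m j * m i * s j i := by rw [hsym]; ring
    _ = (m i * c i) * Δ j := h1 j i
  obtain ⟨i0, hi0⟩ : ∃ i0, Δ i0 ≠ 0 := by
    by_contra h
    push_neg at h
    exact hΔ0 (funext h)
  refine ⟨(m i0 * c i0) / Δ i0, fun i j => ?_⟩
  have hf : (m j * c j) = (m i0 * c i0) / Δ i0 * Δ j := by
    field_simp
    have := h2 i0 j
    linarith
  rw [h1 i j, hf]
  ring
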